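/- Let G be Q_m (or D_m with m even), with α₁, α₃, α₄ defined as α₁ = Σ_{g∈G} x_g g, α₃ = Σ_{g∈G} χ₃(g) x_g g, α₄ = Σ_{g∈⟨a⟩} χ₄(g) x_{g^{-1}} g + Σ_{g∈G\⟨a⟩} χ₄(g) x_g g. Then [α₁, α₃ + α₄] = 0 in C[G], i.e., α₁ commutes with the sum α₃ + α₄, even though in general [α₁, α₃] ≠ 0 and [α₁, α₄] ≠ 0. -/

import Mathlib

/-- `α₁ = Σ_{g∈G} x_g g` for `D_m`. -/
noncomputable def dihedralAlpha1 (m : ℕ) [NeZero m] (x : DihedralGroup m → ℂ) :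
    MonoidAlgebra ℂ (DihedralGroup m) :=
  ∑ g : DihedralGroup m, MonoidAlgebra.single g (x g)

/-- `α₂ = Σ_{g∈⟨a⟩} x_{g⁻¹} g − Σ_{g∈G∖⟨a⟩} x_g g` for `D_m`. -/
noncomputable def dihedralAlpha2 (m : ℕ) [NeZero m] (x : DihedralGroup m → ℂ) :
    MonoidAlgebra ℂ (DihedralGroup m) :=
  (∑ k : ZMod m, MonoidAlgebra.single (DihedralGroup.r k) (x ((DihedralGroup.r k)⁻¹))) -
  ∑ k : ZMod m, MonoidAlgebra.single (DihedralGroup.sr k) (x (DihedralGroup.sr k))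

/-- `α₃ = Σ_g χ₃(g) x_g g` for `D_m`, where `χ₃(a^k) = (−1)^k`, `χ₃(a^k b) = (−1)^k c₃`
with `c₃ = χ₃(b)`. -/
noncomputable def dihedralAlpha3 (m : ℕ) [NeZero m] (c₃ : ℂ) (x : DihedralGroup m → ℂ) :
    MonoidAlgebra ℂ (DihedralGroup m) :=
  (∑ k : ZMod m, MonoidAlgebra.single (DihedralGroup.r k)
      ((-1 : ℂ) ^ k.val * x (DihedralGroup.r k))) +
  ∑ k : ZMod m, MonoidAlgebra.single (DihedralGroup.r k * DihedralGroup.sr 0)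
      ((-1 : ℂ) ^ k.val * c₃ * x (DihedralGroup.r k * DihedralGroup.sr 0))

/-- `α₄ = Σ_{g∈⟨a⟩} χ₄(g) x_{g⁻¹} g + Σ_{g∉⟨a⟩} χ₄(g) x_g g` for `D_m`, where
`χ₄(a^k) = (−1)^k`, `χ₄(a^k b) = (−1)^k c₄` with `c₄ = χ₄(b)`. -/
noncomputable def dihedralAlpha4 (m : ℕ) [NeZero m] (c₄ : ℂ) (x : DihedralGroup m → ℂ) :
    MonoidAlgebra ℂ (DihedralGroup m) :=
  (∑ k : ZMod m, MonoidAlgebra.single (DihedralGroup.r k)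
      ((-1 : ℂ) ^ k.val * x ((DihedralGroup.r k)⁻¹))) +
  ∑ k : ZMod m, MonoidAlgebra.single (DihedralGroup.r k * DihedralGroup.sr 0)
      ((-1 : ℂ) ^ k.val * c₄ * x (DihedralGroup.r k * DihedralGroup.sr 0))

/-- `α₁ = Σ_{g∈G} x_g g` for `Q_m`. -/
noncomputable def quaternionAlpha1 (m : ℕ) [NeZero m] (x : QuaternionGroup m → ℂ) :
    MonoidAlgebra ℂ (QuaternionGroup m) :=
  ∑ g : QuaternionGroup m, MonoidAlgebra.single g (x g)

/-- `α₂ = Σ_{g∈⟨a⟩} x_{g⁻¹} g − Σ_{g∈G∖⟨a⟩} x_g g` for `Q_m`. -/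
noncomputable def quaternionAlpha2 (m : ℕ) [NeZero m] (x : QuaternionGroup m → ℂ) :
    MonoidAlgebra ℂ (QuaternionGroup m) :=
  (∑ k : ZMod (2 * m),
      MonoidAlgebra.single (QuaternionGroup.a k) (x ((QuaternionGroup.a k)⁻¹))) -
  ∑ k : ZMod (2 * m), MonoidAlgebra.single (QuaternionGroup.xa k) (x (QuaternionGroup.xa k))

/-- `α₃ = Σ_g χ₃(g) x_g g` for `Q_m`, where `χ₃(a^k) = (−1)^k`, `χ₃(a^k b) = (−1)^k c₃`. -/
noncomputable def quaternionAlpha3 (m : ℕ) [NeZero m] (c₃ : ℂ) (x : QuaternionGroup m → ℂ) :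
    MonoidAlgebra ℂ (QuaternionGroup m) :=
  (∑ k : ZMod (2 * m), MonoidAlgebra.single (QuaternionGroup.a k)
      ((-1 : ℂ) ^ k.val * x (QuaternionGroup.a k))) +
  ∑ k : ZMod (2 * m), MonoidAlgebra.single (QuaternionGroup.a k * QuaternionGroup.xa 0)
      ((-1 : ℂ) ^ k.val * c₃ * x (QuaternionGroup.a k * QuaternionGroup.xa 0))

/-- `α₄ = Σ_{g∈⟨a⟩} χ₄(g) x_{g⁻¹} g + Σ_{g∉⟨a⟩} χ₄(g) x_g g` for `Q_m`, where
`χ₄(a^k) = (−1)^k`, `χ₄(a^k b) = (−1)^k c₄`. -/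
noncomputable def quaternionAlpha4 (m : ℕ) [NeZero m] (c₄ : ℂ) (x : QuaternionGroup m → ℂ) :
    MonoidAlgebra ℂ (QuaternionGroup m) :=
  (∑ k : ZMod (2 * m), MonoidAlgebra.single (QuaternionGroup.a k)
      ((-1 : ℂ) ^ k.val * x ((QuaternionGroup.a k)⁻¹))) +
  ∑ k : ZMod (2 * m), MonoidAlgebra.single (QuaternionGroup.a k * QuaternionGroup.xa 0)
      ((-1 : ℂ) ^ k.val * c₄ * x (QuaternionGroup.a k * QuaternionGroup.xa 0))

/-! Because `χ₄(b) = -χ₃(b)`, the terms of `α₃` and `α₄` outside `⟨a⟩` cancel, leaving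
`α₃ + α₄ = ∑ₖ (-1)ᵏ (x_{aᵏ} + x_{a⁻ᵏ}) aᵏ`. As the order of `a` is even, `(-1)ᵏ` is well defined
and its coefficients are invariant under `k ↦ -k`; since elements outside `⟨a⟩` conjugate `aᵏ`
to `a⁻ᵏ`, this element is central in `ℂ[G]`. -/

open MonoidAlgebra

theorem neg_one_pow_val_neg {R : Type*} [Monoid R] [HasDistribNeg R] {n : ℕ} [NeZero n]
    (hn : 2 ∣ n) (k : ZMod n) : (-1 : R) ^ (-k).val = (-1) ^ k.val := by
  have hmod : ((-k).val : ZMod 2) = (k.val : ZMod 2) := by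
    rw [ZMod.natCast_val, ZMod.natCast_val, ZMod.cast_neg hn, ZMod.neg_eq_self_mod_two]
  exact neg_one_pow_congr <| by
    rw [← ZMod.natCast_eq_zero_iff_even, hmod, ZMod.natCast_eq_zero_iff_even]

theorem MonoidAlgebra.commute_single_sum_single {k G ι : Type*} [CommSemiring k] [Monoid G]
    [Fintype ι] (g : G) (v : k) (φ : ι → G) (c : ι → k) (σ : ι ≃ ι)
    (hφ : ∀ i, g * φ i = φ (σ i) * g) (hc : ∀ i, c (σ i) = c i) :
    Commute (single g v) (∑ i, single (φ i) (c i)) := by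
  simp only [Commute, SemiconjBy, Finset.mul_sum, Finset.sum_mul, single_mul_single, hφ]
  exact (Finset.sum_congr rfl fun i _ => by rw [hc, mul_comm]).trans
    (σ.sum_comp fun i => single (φ i * g) (c i * v))

section Dihedral

open DihedralGroup

variable {k : Type*} [CommSemiring k] {n : ℕ} [NeZero n]

theorem DihedralGroup.commute_single_sum_single_r (c : ZMod n → k) (hc : ∀ j, c (-j) = c j)
    (g : DihedralGroup n) (v : k) : Commute (single g v) (∑ j, single (r j) (c j)) := by
  cases g with
  | r i =>
    exact commute_single_sum_single _ v r c (Equiv.refl _) (fun j => by simp [add_comm])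
      fun _ => rfl
  | sr i => exact commute_single_sum_single _ v r c (Equiv.neg _) (fun j => by simp) hc

variable (m : ℕ) [NeZero m]

theorem dihedralAlpha1_commute (x : DihedralGroup m → ℂ) (c : ZMod m → ℂ)
    (hc : ∀ j, c (-j) = c j) : Commute (dihedralAlpha1 m x) (∑ j, single (r j) (c j)) :=
  Commute.sum_left _ _ _ fun g _ => commute_single_sum_single_r c hc g (x g)

theorem dihedralAlpha3_add_dihedralAlpha4 (c : ℂ) (x : DihedralGroup m → ℂ) :
    dihedralAlpha3 m c x + dihedralAlpha4 m (-c) x =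
      ∑ j, single (r j) ((-1 : ℂ) ^ j.val * (x (r j) + x (r (-j)))) := by
  have hcancel : ∀ j : ZMod m, (-1 : ℂ) ^ j.val * c * x (r j * sr 0) +
      (-1 : ℂ) ^ j.val * -c * x (r j * sr 0) = 0 := fun j => by ring
  rw [dihedralAlpha3, dihedralAlpha4, add_add_add_comm, ← Finset.sum_add_distrib,
    ← Finset.sum_add_distrib]
  simp only [← single_add, hcancel, single_zero, Finset.sum_const_zero, add_zero, mul_add]
  rfl

end Dihedral

section Quaternion

open QuaternionGroup

variable {k : Type*} [CommSemiring k] {n : ℕ} [NeZero n]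

theorem QuaternionGroup.commute_single_sum_single_a (c : ZMod (2 * n) → k)
    (hc : ∀ j, c (-j) = c j) (g : QuaternionGroup n) (v : k) :
    Commute (single g v) (∑ j, single (a j) (c j)) := by
  cases g with
  | a i =>
    exact commute_single_sum_single _ v a c (Equiv.refl _) (fun j => by simp [add_comm])
      fun _ => rfl
  | xa i => exact commute_single_sum_single _ v a c (Equiv.neg _) (fun j => by simp) hc

variable (m : ℕ) [NeZero m]

theorem quaternionAlpha1_commute (y : QuaternionGroup m → ℂ) (c : ZMod (2 * m) → ℂ)
    (hc : ∀ j, c (-j) = c j) : Commute (quaternionAlpha1 m y) (∑ j, single (a j) (c j)) :=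
  Commute.sum_left _ _ _ fun g _ => commute_single_sum_single_a c hc g (y g)

theorem quaternionAlpha3_add_quaternionAlpha4 (c : ℂ) (y : QuaternionGroup m → ℂ) :
    quaternionAlpha3 m c y + quaternionAlpha4 m (-c) y =
      ∑ j, single (a j) ((-1 : ℂ) ^ j.val * (y (a j) + y (a (-j)))) := by
  have hcancel : ∀ j : ZMod (2 * m), (-1 : ℂ) ^ j.val * c * y (a j * xa 0) +
      (-1 : ℂ) ^ j.val * -c * y (a j * xa 0) = 0 := fun j => by ring
  rw [quaternionAlpha3, quaternionAlpha4, add_add_add_comm, ← Finset.sum_add_distrib,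
    ← Finset.sum_add_distrib]
  simp only [← single_add, hcancel, single_zero, Finset.sum_const_zero, add_zero, mul_add]
  rfl

end Quaternion

/-- For `G = Q_m` (or `D_m` with `m` even), `α₁` commutes with `α₃ + α₄`:
`[α₁, α₃ + α₄] = 0` in `ℂ[G]`. -/
theorem alpha1_commutes_with_alpha3_add_alpha4 (m : ℕ) [NeZero m]
    (x : DihedralGroup m → ℂ) (y : QuaternionGroup m → ℂ) :
    (Even m →
      dihedralAlpha1 m x * (dihedralAlpha3 m 1 x + dihedralAlpha4 m (-1) x) -
        (dihedralAlpha3 m 1 x + dihedralAlpha4 m (-1) x) * dihedralAlpha1 m x = 0) ∧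
    (Odd m →
      quaternionAlpha1 m y *
          (quaternionAlpha3 m Complex.I y + quaternionAlpha4 m (-Complex.I) y) -
        (quaternionAlpha3 m Complex.I y + quaternionAlpha4 m (-Complex.I) y) *
          quaternionAlpha1 m y = 0) ∧
    (Even m →
      quaternionAlpha1 m y * (quaternionAlpha3 m 1 y + quaternionAlpha4 m (-1) y) -
        (quaternionAlpha3 m 1 y + quaternionAlpha4 m (-1) y) * quaternionAlpha1 m y = 0) := by
  have dihedral (hm : Even m) : Commute (dihedralAlpha1 m x)
      (dihedralAlpha3 m 1 x + dihedralAlpha4 m (-1) x) := by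
    rw [dihedralAlpha3_add_dihedralAlpha4]
    exact dihedralAlpha1_commute m x _ fun j => by
      rw [neg_one_pow_val_neg hm.two_dvd, neg_neg, add_comm]
  have quaternion (c : ℂ) : Commute (quaternionAlpha1 m y)
      (quaternionAlpha3 m c y + quaternionAlpha4 m (-c) y) := by
    rw [quaternionAlpha3_add_quaternionAlpha4]
    exact quaternionAlpha1_commute m y _ fun j => by
      rw [neg_one_pow_val_neg (dvd_mul_right 2 m), neg_neg, add_comm]
  exact ⟨fun hm => sub_eq_zero.mpr (dihedral hm).eq, fun _ => sub_eq_zero.mpr (quaternion _).eq,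
    fun _ => sub_eq_zero.mpr (quaternion 1).eq⟩
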